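/- Let ξ and η be positive irrational real numbers and m a positive natural number with ξ·η = m. Suppose the indices (n, k) with n ≥ 1 and k ≥ 1 are connected, i.e. p_{n−1}·P_{k−1} = m·q_{n−1}·Q_{k−1}. Then Q_{k−1} divides p_{n−1} and q_{n−1} divides P_{k−1}, and the natural numbers r = p_{n−1}/Q_{k−1} and s = P_{k−1}/q_{n−1} satisfy r·s = m and −2r + 2 ≤ r·b_n − s·B_k ≤ 2s − 2. -/

import Mathlib

/-- Complete quotients: `cq ξ 0 = ξ`, `cq ξ (n+1) = 1/(cq ξ n - ⌊cq ξ n⌋)`. -/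
noncomputable def cq (ξ : ℝ) : ℕ → ℝ
  | 0 => ξ
  | n + 1 => 1 / (cq ξ n - ⌊cq ξ n⌋)

/-- Partial quotients: `pquot ξ n = b_n = ⌊ξ_n⌋`. -/
noncomputable def pquot (ξ : ℝ) (n : ℕ) : ℤ := ⌊cq ξ n⌋

/-- Convergent numerators, shifted by one: `cnum ξ 0 = p_{-1} = 1`,
`cnum ξ 1 = p_0 = b_0`, and `cnum ξ (n+1) = p_n = b_n p_{n-1} + p_{n-2}`. -/
noncomputable def cnum (ξ : ℝ) : ℕ → ℤ
  | 0 => 1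
  | 1 => pquot ξ 0
  | n + 2 => pquot ξ (n + 1) * cnum ξ (n + 1) + cnum ξ n

/-- Convergent denominators, shifted by one: `cden ξ 0 = q_{-1} = 0`,
`cden ξ 1 = q_0 = 1`, and `cden ξ (n+1) = q_n = b_n q_{n-1} + q_{n-2}`. -/
noncomputable def cden (ξ : ℝ) : ℕ → ℤ
  | 0 => 0
  | 1 => 1
  | n + 2 => pquot ξ (n + 1) * cden ξ (n + 1) + cden ξ n

/-!
Put `x = ξ_n`, `y = η_k`, `p = p_{n-1}`, `p' = p_{n-2}` (and likewise `q`, `P`, `Q`), so that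
`ξ = (p x + p') / (q x + q')` and `η = (P y + P') / (Q y + Q')`. Since `p, q` and `P, Q` are
coprime, `p P = m q Q` forces `p = Q r`, `P = q s` with `r s = m`. The errors
`q ξ - p = ±1 / (q x + q')` and `Q η - P = ±1 / (Q y + Q')` are related through
`(q ξ) (Q η) = p P`; comparing signs shows that `n` and `k` have opposite parities and that
`P y + P' = r (q x + q')`. Hence `s y - r x` is an integer `W` with `q W = r q' - P'`, which
gives `W < r` (with one exceptional configuration ruled out by the parities), and then
`r b_n - s B_k > r (x - 1) - s y = -W - r ≥ 1 - 2 r`. The upper bound is the same inequality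
with the roles of `ξ` and `η` exchanged.
-/

section Algebra

theorem neg_one_pow_mul_self (R : Type*) [Monoid R] [HasDistribNeg R] (n : ℕ) :
    (-1 : R) ^ n * (-1) ^ n = 1 := by
  rw [← pow_add, ← two_mul, pow_mul, neg_one_sq, one_pow]

-- Compare the errors `q ξ - p = ±1 / (q x + q')` and `Q η - P = ±1 / (Q y + Q')` through
-- `(q ξ) (Q η) = p P`.
theorem mobius_det_relation {K : Type*} [Field K] {ξ η x y p p' q q' P P' Q Q' r : K}
    (hξ : ξ * (q * x + q') = p * x + p') (hη : η * (Q * y + Q') = P * y + P')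
    (hpP : p * P = ξ * η * q * Q) (hp : p = Q * r) (hQ : Q ≠ 0) :
    (p' * q - p * q') * (P * y + P') = -((P' * Q - P * Q') * (r * (q * x + q'))) := by
  refine mul_left_cancel₀ hQ ?_
  linear_combination (-Q * (p' * q - p * q') - Q * r * (q * x + q') * Q) * hη
    - Q * η * (Q * y + Q') * q * hξ - (q * x + q') * (Q * y + Q') * (Q * η - P) * hp
    - (q * x + q') * (Q * y + Q') * hpP

theorem eq_neg_and_eq_of_mul_eq_neg_mul {R : Type*} [CommRing R] [LinearOrder R]
    [IsStrictOrderedRing R] {ε δ u v : R} (hε : ε = 1 ∨ ε = -1) (hδ : δ = 1 ∨ δ = -1)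
    (hu : 0 < u) (hv : 0 < v) (h : ε * u = -(δ * v)) : ε = -δ ∧ u = v := by
  rcases hε with rfl | rfl <;> rcases hδ with rfl | rfl <;> constructor <;> linarith

theorem lt_of_mul_eq_mul_sub {R : Type*} [CommRing R] [LinearOrder R] [IsStrictOrderedRing R]
    {q q' P' r w : R} (hq : 0 < q) (hq' : q' ≤ q) (hP' : 0 ≤ P') (hr : 0 < r)
    (hlt : q' < q ∨ 0 < P') (h : q * w = r * q' - P') : w < r := by
  by_contra! hw
  have := mul_le_mul_of_nonneg_left hw hq.le
  rcases hlt with hlt | hlt <;> nlinarith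

end Algebra

section ContinuedFraction

variable {ξ : ℝ}

theorem irrational_cq (h : Irrational ξ) : ∀ n, Irrational (cq ξ n)
  | 0 => h
  | n + 1 => by simpa only [cq, one_div] using ((irrational_cq h n).sub_intCast _).inv

theorem cq_succ (n : ℕ) : cq ξ (n + 1) = (Int.fract (cq ξ n))⁻¹ := by
  rw [cq, one_div, Int.self_sub_floor]

theorem fract_cq_pos (h : Irrational ξ) (n : ℕ) : 0 < Int.fract (cq ξ n) :=
  Int.fract_pos.2 ((irrational_cq h n).ne_int _)

theorem one_lt_cq_succ (h : Irrational ξ) (n : ℕ) : 1 < cq ξ (n + 1) := by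
  rw [cq_succ, one_lt_inv₀ (fract_cq_pos h n)]
  exact Int.fract_lt_one _

theorem cq_mul_cq_succ (h : Irrational ξ) (n : ℕ) :
    cq ξ n * cq ξ (n + 1) = pquot ξ n * cq ξ (n + 1) + 1 := by
  have hfract : Int.fract (cq ξ n) * cq ξ (n + 1) = 1 := by
    rw [cq_succ]; exact mul_inv_cancel₀ (fract_cq_pos h n).ne'
  rw [← Int.self_sub_floor] at hfract
  rw [pquot]; linear_combination hfract

theorem one_le_pquot_succ (h : Irrational ξ) (n : ℕ) : 1 ≤ pquot ξ (n + 1) :=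
  Int.le_floor.2 (by exact_mod_cast (one_lt_cq_succ h n).le)

theorem cden_nonneg (h : Irrational ξ) : ∀ n, 0 ≤ cden ξ n
  | 0 => le_rfl
  | 1 => zero_le_one
  | n + 2 => by
    have := one_le_pquot_succ h n
    have := cden_nonneg h (n + 1)
    have := cden_nonneg h n
    rw [cden]; positivity

theorem cden_le_cden_succ (h : Irrational ξ) : ∀ n, cden ξ n ≤ cden ξ (n + 1)
  | 0 => zero_le_one
  | n + 1 => by
    have := one_le_pquot_succ h n
    have := cden_nonneg h (n + 1)
    have := cden_nonneg h n
    rw [cden]; nlinarith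

theorem one_le_cden_succ (h : Irrational ξ) : ∀ n, 1 ≤ cden ξ (n + 1)
  | 0 => le_rfl
  | n + 1 => (one_le_cden_succ h n).trans (cden_le_cden_succ h (n + 1))

theorem cden_lt_cden_succ (h : Irrational ξ) : ∀ {n}, n ≠ 1 → cden ξ n < cden ξ (n + 1)
  | 0, _ => zero_lt_one
  | n + 2, _ => by
    have := one_le_pquot_succ h (n + 1)
    have := cden_nonneg h (n + 2)
    have := one_le_cden_succ h n
    show cden ξ (n + 2) < pquot ξ (n + 2) * cden ξ (n + 2) + cden ξ (n + 1)
    nlinarith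

theorem cnum_nonneg (h0 : 0 < ξ) (h : Irrational ξ) : ∀ n, 0 ≤ cnum ξ n
  | 0 => zero_le_one
  | 1 => Int.floor_nonneg.2 h0.le
  | n + 2 => by
    have := one_le_pquot_succ h n
    have := cnum_nonneg h0 h (n + 1)
    have := cnum_nonneg h0 h n
    rw [cnum]; positivity

theorem cnum_pos_of_ne_one (h0 : 0 < ξ) (h : Irrational ξ) : ∀ {n}, n ≠ 1 → 0 < cnum ξ n
  | 0, _ => one_pos
  | 2, _ => by
    have := one_le_pquot_succ h 0
    have := cnum_nonneg h0 h 1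
    rw [cnum, cnum]; positivity
  | n + 3, _ => by
    have := one_le_pquot_succ h (n + 1)
    have := cnum_pos_of_ne_one h0 h (n := n + 2) (by omega)
    have := cnum_nonneg h0 h (n + 1)
    rw [cnum]; positivity

theorem cnum_mul_cden_succ_sub (ξ : ℝ) :
    ∀ n, cnum ξ n * cden ξ (n + 1) - cnum ξ (n + 1) * cden ξ n = (-1) ^ n
  | 0 => by simp [cnum, cden]
  | n + 1 => by
    rw [cnum, cden, pow_succ, ← cnum_mul_cden_succ_sub ξ n]; ring

theorem isCoprime_cnum_cden (ξ : ℝ) (n : ℕ) : IsCoprime (cnum ξ n) (cden ξ n) :=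
  ⟨(-1) ^ n * cden ξ (n + 1), -(-1) ^ n * cnum ξ (n + 1), by
    linear_combination (-1 : ℤ) ^ n * cnum_mul_cden_succ_sub ξ n + neg_one_pow_mul_self ℤ n⟩

theorem mul_cden_cq_add (h : Irrational ξ) : ∀ n,
    ξ * (cden ξ (n + 1) * cq ξ (n + 1) + cden ξ n) = cnum ξ (n + 1) * cq ξ (n + 1) + cnum ξ n
  | 0 => by
    have h0 : ξ * cq ξ 1 = pquot ξ 0 * cq ξ 1 + 1 := cq_mul_cq_succ h 0
    simp only [cden, cnum, Int.cast_one, Int.cast_zero]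
    linear_combination h0
  | n + 1 => by
    simp only [cden, cnum, Int.cast_add, Int.cast_mul]
    linear_combination cq ξ (n + 2) * mul_cden_cq_add h n
      + (cnum ξ (n + 1) - ξ * cden ξ (n + 1)) * cq_mul_cq_succ h (n + 1)

end ContinuedFraction

def ConnectedIndices (ξ η : ℝ) (m n k : ℕ) : Prop :=
  cnum ξ n * cnum η k = m * cden ξ n * cden η k

namespace ConnectedIndices

variable {ξ η : ℝ} {m n k a c : ℕ}

theorem symm (h : ConnectedIndices ξ η m n k) : ConnectedIndices η ξ m k n := by
  unfold ConnectedIndices at *; linear_combination h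

theorem cden_dvd_cnum (h : ConnectedIndices ξ η m n k) : cden η k ∣ cnum ξ n :=
  (isCoprime_cnum_cden η k).symm.dvd_of_dvd_mul_right ⟨m * cden ξ n, by rw [h]; ring⟩

theorem mul_eq (h : ConnectedIndices ξ η m n k) {r s : ℤ} (hr : cnum ξ n = cden η k * r)
    (hs : cnum η k = cden ξ n * s) (hq : cden ξ n ≠ 0) (hQ : cden η k ≠ 0) : r * s = m := by
  unfold ConnectedIndices at h
  rw [hr, hs] at h
  exact mul_left_cancel₀ (mul_ne_zero hq hQ) (by linear_combination h)

theorem cnum_pos (hξ : Irrational ξ) (hη : Irrational η) (hη0 : 0 < η) (hm : 0 < m)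
    (h : ConnectedIndices ξ η m (a + 1) (c + 1)) : 0 < cnum ξ (a + 1) := by
  have := one_le_cden_succ hξ a
  have := one_le_cden_succ hη c
  have hpP : 0 < cnum ξ (a + 1) * cnum η (c + 1) := by rw [h]; positivity
  exact pos_of_mul_pos_left hpP (cnum_nonneg hη0 hη _)

theorem neg_one_pow_eq_neg_and_num_eq_mul_den (hξ : Irrational ξ) (hη : Irrational η)
    (hξ0 : 0 < ξ) (hη0 : 0 < η) (hm : 0 < m) (hmul : ξ * η = m)
    (h : ConnectedIndices ξ η m (a + 1) (c + 1)) {r : ℤ}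
    (hr : cnum ξ (a + 1) = cden η (c + 1) * r) :
    (-1 : ℤ) ^ a = -(-1) ^ c ∧
      (cnum η (c + 1) * cq η (c + 1) + cnum η c : ℝ) =
        r * (cden ξ (a + 1) * cq ξ (a + 1) + cden ξ a) := by
  have hq := one_le_cden_succ hξ a
  have hQ := one_le_cden_succ hη c
  have hr0 : 0 < r := pos_of_mul_pos_right (hr ▸ h.cnum_pos hξ hη hη0 hm) (by omega)
  have hden : (0 : ℝ) < cden ξ (a + 1) * cq ξ (a + 1) + cden ξ a := by
    have := one_lt_cq_succ hξ a
    have : (0 : ℝ) ≤ cden ξ a := by exact_mod_cast cden_nonneg hξ a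
    have : (1 : ℝ) ≤ cden ξ (a + 1) := by exact_mod_cast hq
    nlinarith
  have hnum : (0 : ℝ) < cnum η (c + 1) * cq η (c + 1) + cnum η c := by
    have := one_lt_cq_succ hη c
    have : (0 : ℝ) ≤ cnum η c := by exact_mod_cast cnum_nonneg hη0 hη c
    have : (0 : ℝ) < cnum η (c + 1) := by exact_mod_cast h.symm.cnum_pos hη hξ hξ0 hm
    nlinarith
  have hpP : (cnum ξ (a + 1) * cnum η (c + 1) : ℝ) =
      ξ * η * cden ξ (a + 1) * cden η (c + 1) := by
    rw [hmul]; exact_mod_cast h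
  have hdetξ : (cnum ξ a * cden ξ (a + 1) - cnum ξ (a + 1) * cden ξ a : ℝ) = (-1) ^ a := by
    exact_mod_cast cnum_mul_cden_succ_sub ξ a
  have hdetη : (cnum η c * cden η (c + 1) - cnum η (c + 1) * cden η c : ℝ) = (-1) ^ c := by
    exact_mod_cast cnum_mul_cden_succ_sub η c
  have hrR : (cnum ξ (a + 1) : ℝ) = cden η (c + 1) * r := by exact_mod_cast hr
  have key := mobius_det_relation (mul_cden_cq_add hξ a) (mul_cden_cq_add hη c) hpP hrR
    (by exact_mod_cast (show cden η (c + 1) ≠ 0 by omega))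
  rw [hdetξ, hdetη] at key
  obtain ⟨hsign, hscale⟩ := eq_neg_and_eq_of_mul_eq_neg_mul (neg_one_pow_eq_or ℝ a)
    (neg_one_pow_eq_or ℝ c) hnum (mul_pos (by exact_mod_cast hr0) hden) key
  exact ⟨by exact_mod_cast hsign, hscale⟩

theorem exists_int_lt_eq_mul_cq_sub (hξ : Irrational ξ) (hη : Irrational η)
    (hξ0 : 0 < ξ) (hη0 : 0 < η) (hm : 0 < m) (hmul : ξ * η = m)
    (h : ConnectedIndices ξ η m (a + 1) (c + 1)) {r s : ℤ}
    (hr : cnum ξ (a + 1) = cden η (c + 1) * r) (hs : cnum η (c + 1) = cden ξ (a + 1) * s) :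
    ∃ W : ℤ, W < r ∧ (W : ℝ) = s * cq η (c + 1) - r * cq ξ (a + 1) := by
  have hq := one_le_cden_succ hξ a
  have hQ := one_le_cden_succ hη c
  have hrs := h.mul_eq hr hs (by omega) (by omega)
  have hr0 : 0 < r := pos_of_mul_pos_right (hr ▸ h.cnum_pos hξ hη hη0 hm) (by omega)
  obtain ⟨hsign, hscale⟩ := h.neg_one_pow_eq_neg_and_num_eq_mul_den hξ hη hξ0 hη0 hm hmul hr
  set W : ℤ := (-1) ^ a * (m * cden ξ a * cden η c - cnum ξ a * cnum η c)
  have hqW : cden ξ (a + 1) * W = r * cden ξ a - cnum η c := by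
    linear_combination (-(-1) ^ a * cden ξ (a + 1) * cden ξ a * cden η c) * hrs
      - (-1) ^ a * r * cden ξ a * cden η c * hs
      - (-1) ^ a * cnum η c * cnum_mul_cden_succ_sub ξ a
      - (-1) ^ a * cnum η c * cden ξ a * hr
      - (-1) ^ a * r * cden ξ a * cnum_mul_cden_succ_sub η c
      - (-1) ^ a * r * cden ξ a * hsign
      + (r * cden ξ a - cnum η c) * neg_one_pow_mul_self ℤ a
  refine ⟨W, ?_, ?_⟩
  · refine lt_of_mul_eq_mul_sub (by omega) (cden_le_cden_succ hξ a) (cnum_nonneg hη0 hη c) hr0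
      ?_ hqW
    -- `a` and `c` have different parities, so they are not both `1`
    have : a ≠ 1 ∨ c ≠ 1 := by
      by_contra! ⟨rfl, rfl⟩
      norm_num at hsign
    exact this.imp (cden_lt_cden_succ hξ) (cnum_pos_of_ne_one hη0 hη)
  · refine mul_left_cancel₀ (show (cden ξ (a + 1) : ℝ) ≠ 0 by norm_cast; omega) ?_
    have hqWR : (cden ξ (a + 1) * W : ℝ) = r * cden ξ a - cnum η c := by exact_mod_cast hqW
    have hsR : (cnum η (c + 1) : ℝ) = cden ξ (a + 1) * s := by exact_mod_cast hs
    linear_combination hqWR - hscale + cq η (c + 1) * hsR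

theorem neg_two_mul_add_two_le (hξ : Irrational ξ) (hη : Irrational η)
    (hξ0 : 0 < ξ) (hη0 : 0 < η) (hm : 0 < m) (hmul : ξ * η = m)
    (h : ConnectedIndices ξ η m (a + 1) (c + 1)) {r s : ℤ}
    (hr : cnum ξ (a + 1) = cden η (c + 1) * r) (hs : cnum η (c + 1) = cden ξ (a + 1) * s) :
    -2 * r + 2 ≤ r * pquot ξ (a + 1) - s * pquot η (c + 1) := by
  have hr0 : 0 < r := pos_of_mul_pos_right (hr ▸ h.cnum_pos hξ hη hη0 hm)
    (zero_le_one.trans (one_le_cden_succ hη c))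
  have hs0 : 0 < s := pos_of_mul_pos_right (hs ▸ h.symm.cnum_pos hη hξ hξ0 hm)
    (zero_le_one.trans (one_le_cden_succ hξ a))
  obtain ⟨W, hWr, hW⟩ := h.exists_int_lt_eq_mul_cq_sub hξ hη hξ0 hη0 hm hmul hr hs
  have hx : (r : ℝ) * (cq ξ (a + 1) - 1) < r * pquot ξ (a + 1) :=
    mul_lt_mul_of_pos_left (sub_lt_iff_lt_add.2 (Int.lt_floor_add_one _)) (by exact_mod_cast hr0)
  have hy : (s : ℝ) * pquot η (c + 1) ≤ s * cq η (c + 1) :=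
    mul_le_mul_of_nonneg_left (Int.floor_le _) (by exact_mod_cast hs0.le)
  have hbound : ((-W - r : ℤ) : ℝ) < (r * pquot ξ (a + 1) - s * pquot η (c + 1) : ℤ) := by
    push_cast; linarith
  have := Int.cast_lt.1 hbound
  omega

end ConnectedIndices

/-- Theorem 2.6: for a connected pair `(n,k)` the natural numbers
`r = p_{n-1}/Q_{k-1}` and `s = P_{k-1}/q_{n-1}` satisfy `r·s = m` and
`-2r + 2 ≤ r·b_n - s·B_k ≤ 2s - 2`. -/
theorem connected_partial_quotient_bounds
    (ξ η : ℝ) (m : ℕ) (hξpos : 0 < ξ) (hηpos : 0 < η)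
    (hξirr : Irrational ξ) (hηirr : Irrational η) (hm : 0 < m)
    (hmul : ξ * η = m) (n k : ℕ) (hn : 1 ≤ n) (hk : 1 ≤ k)
    (hconn : cnum ξ n * cnum η k = (m : ℤ) * cden ξ n * cden η k) :
    cden η k ∣ cnum ξ n ∧ cden ξ n ∣ cnum η k ∧
    (cnum ξ n / cden η k) * (cnum η k / cden ξ n) = (m : ℤ) ∧
    -2 * (cnum ξ n / cden η k) + 2 ≤
      (cnum ξ n / cden η k) * pquot ξ n - (cnum η k / cden ξ n) * pquot η k ∧
    (cnum ξ n / cden η k) * pquot ξ n - (cnum η k / cden ξ n) * pquot η k ≤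
      2 * (cnum η k / cden ξ n) - 2 := by
  obtain ⟨a, rfl⟩ := Nat.exists_eq_add_of_le' hn
  obtain ⟨c, rfl⟩ := Nat.exists_eq_add_of_le' hk
  have h : ConnectedIndices ξ η m (a + 1) (c + 1) := hconn
  have hq : cden ξ (a + 1) ≠ 0 := by have := one_le_cden_succ hξirr a; omega
  have hQ : cden η (c + 1) ≠ 0 := by have := one_le_cden_succ hηirr c; omega
  obtain ⟨r, hr⟩ := h.cden_dvd_cnum
  obtain ⟨s, hs⟩ := h.symm.cden_dvd_cnum
  rw [hr, hs, Int.mul_ediv_cancel_left r hQ, Int.mul_ediv_cancel_left s hq]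
  have hlower := h.neg_two_mul_add_two_le hξirr hηirr hξpos hηpos hm hmul hr hs
  have hupper :=
    h.symm.neg_two_mul_add_two_le hηirr hξirr hηpos hξpos hm (by rwa [mul_comm]) hs hr
  exact ⟨⟨r, rfl⟩, ⟨s, rfl⟩, h.mul_eq hr hs hq hQ, hlower, by linarith⟩
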